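/- Neither of the polynomials f₁ = X³ + Y³ + 3X²Z + 3Y²Z + 3XZ² + 3YZ² + 2Z³ nor f₂ = X³ + XY² + X²Z + 2XYZ + 3Y²Z + 4XZ² + 2YZ² + 2Z³ in ℝ[X,Y,Z] can be written as a product g·h of two nonconstant polynomials g, h ∈ ℝ[X,Y,Z] each of which has all coefficients nonnegative. -/

import Mathlib

/-!
With nonnegative coefficients nothing cancels in a product: a monomial occurs in `g * h` exactly
when it is the product of a monomial of `g` and one of `h`. Since total degrees add, the monomial
`X³` of `fᵢ` must split as `X · X²` between the two factors; say `X² ∈ h`.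

For `f₁`, which has no monomial `X²Yʲ`, this leaves `g` without pure powers of `Y`, yet `Y³` occurs
in `f₁`. For `f₂`, with `X ∈ g`: the only monomials of `f₂` divisible by `X²` are `X³` and `X²Z`,
so `g = αX + γZ`, and `XY ∉ h` because `X²Y ∉ f₂`. The coefficients of `XY², Y²Z, XYZ, YZ²` then
give `ατ = 1, γτ = 3, αε = 2, γε = 2`, impossible since `(ατ)(γε) = (γτ)(αε)`.
-/

noncomputable section

open MvPolynomial in
/-- `f₁ = X³ + Y³ + 3X²Z + 3Y²Z + 3XZ² + 3YZ² + 2Z³` over `ℝ`. -/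
def f1 : MvPolynomial (Fin 3) ℝ :=
  X 0 ^ 3 + X 1 ^ 3 + 3 * X 0 ^ 2 * X 2 + 3 * X 1 ^ 2 * X 2 +
    3 * X 0 * X 2 ^ 2 + 3 * X 1 * X 2 ^ 2 + 2 * X 2 ^ 3

open MvPolynomial in
/-- `f₂ = X³ + XY² + X²Z + 2XYZ + 3Y²Z + 4XZ² + 2YZ² + 2Z³` over `ℝ`. -/
def f2 : MvPolynomial (Fin 3) ℝ :=
  X 0 ^ 3 + X 0 * X 1 ^ 2 + X 0 ^ 2 * X 2 + 2 * X 0 * X 1 * X 2 +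
    3 * X 1 ^ 2 * X 2 + 4 * X 0 * X 2 ^ 2 + 2 * X 1 * X 2 ^ 2 + 2 * X 2 ^ 3

/-- `f` admits no factorization `f = g·h` into two nonconstant polynomials
each with all coefficients nonnegative. -/
def NoNonnegFactorization (f : MvPolynomial (Fin 3) ℝ) : Prop :=
  ¬ ∃ g h : MvPolynomial (Fin 3) ℝ,
      0 < g.totalDegree ∧ 0 < h.totalDegree ∧
      (∀ m, 0 ≤ MvPolynomial.coeff m g) ∧ (∀ m, 0 ≤ MvPolynomial.coeff m h) ∧
      f = g * h

namespace MvPolynomial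

section Nonneg

variable {σ R : Type*} [CommSemiring R] [PartialOrder R] {g h : MvPolynomial σ R}

theorem coeff_mul_coeff_le_coeff_mul [IsOrderedRing R] (hg : ∀ m, 0 ≤ coeff m g)
    (hh : ∀ m, 0 ≤ coeff m h) (a b : σ →₀ ℕ) :
    coeff a g * coeff b h ≤ coeff (a + b) (g * h) := by
  classical
  rw [coeff_mul]
  exact Finset.single_le_sum (f := fun p => coeff p.1 g * coeff p.2 h) (a := (a, b))
    (fun p _ => mul_nonneg (hg _) (hh _)) (Finset.HasAntidiagonal.mem_antidiagonal.mpr rfl)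

theorem coeff_eq_zero_of_coeff_mul_eq_zero [IsStrictOrderedRing R] (hg : ∀ m, 0 ≤ coeff m g)
    (hh : ∀ m, 0 ≤ coeff m h) {a b : σ →₀ ℕ} (hb : 0 < coeff b h)
    (hab : coeff (a + b) (g * h) = 0) : coeff a g = 0 := by
  by_contra ha
  have := coeff_mul_coeff_le_coeff_mul hg hh a b
  rw [hab] at this
  exact this.not_gt (mul_pos ((hg a).lt_of_ne' ha) hb)

theorem exists_coeff_pos_of_coeff_mul_pos (hg : ∀ m, 0 ≤ coeff m g)
    (hh : ∀ m, 0 ≤ coeff m h) {m : σ →₀ ℕ} (hm : 0 < coeff m (g * h)) :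
    ∃ a b, a + b = m ∧ 0 < coeff a g ∧ 0 < coeff b h := by
  classical
  rw [coeff_mul] at hm
  obtain ⟨⟨a, b⟩, hab, hne⟩ := Finset.exists_ne_zero_of_sum_ne_zero hm.ne'
  exact ⟨a, b, Finset.HasAntidiagonal.mem_antidiagonal.mp hab,
    (hg a).lt_of_ne' (left_ne_zero_of_mul hne), (hh b).lt_of_ne' (right_ne_zero_of_mul hne)⟩

end Nonneg

theorem totalDegree_lt_totalDegree_mul {σ R : Type*} [CommSemiring R] [NoZeroDivisors R]
    {g h : MvPolynomial σ R} (hgh : g * h ≠ 0) (hh : 0 < h.totalDegree) :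
    g.totalDegree < (g * h).totalDegree := by
  rw [totalDegree_mul_of_isDomain (left_ne_zero_of_mul hgh) (right_ne_zero_of_mul hgh)]
  omega

theorem eq_monomial_add_monomial_of_support_subset {σ R : Type*} [CommSemiring R] [DecidableEq σ]
    {p : MvPolynomial σ R} {a b : σ →₀ ℕ} (hab : a ≠ b) (hp : p.support ⊆ {a, b}) :
    p = monomial a (coeff a p) + monomial b (coeff b p) := by
  conv_lhs => rw [p.as_sum]
  rw [Finset.sum_subset hp, Finset.sum_pair hab]
  intro m _ hm
  rw [notMem_support_iff.mp hm, monomial_zero]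

end MvPolynomial

open MvPolynomial

-- The exponent of `Xᵃ Yᵇ Zᶜ`, where `X, Y, Z` are `X 0, X 1, X 2`.
def xyz (a b c : ℕ) : Fin 3 →₀ ℕ :=
  Finsupp.single 0 a + Finsupp.single 1 b + Finsupp.single 2 c

@[simp] theorem xyz_apply_zero (a b c : ℕ) : xyz a b c 0 = a := by simp [xyz]
@[simp] theorem xyz_apply_one (a b c : ℕ) : xyz a b c 1 = b := by simp [xyz]
@[simp] theorem xyz_apply_two (a b c : ℕ) : xyz a b c 2 = c := by simp [xyz]

theorem eq_xyz (m : Fin 3 →₀ ℕ) : m = xyz (m 0) (m 1) (m 2) := by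
  ext i; fin_cases i <;> simp

@[simp] theorem xyz_inj {a b c a' b' c' : ℕ} :
    xyz a b c = xyz a' b' c' ↔ a = a' ∧ b = b' ∧ c = c' := by
  refine ⟨fun h => ⟨?_, ?_, ?_⟩, fun ⟨ha, hb, hc⟩ => by rw [ha, hb, hc]⟩
  · simpa using DFunLike.congr_fun h 0
  · simpa using DFunLike.congr_fun h 1
  · simpa using DFunLike.congr_fun h 2

@[simp] theorem xyz_add_xyz (a b c a' b' c' : ℕ) :
    xyz a b c + xyz a' b' c' = xyz (a + a') (b + b') (c + c') := by
  rw [eq_xyz (_ + _)]; simp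

@[simp] theorem xyz_le_xyz {a b c a' b' c' : ℕ} :
    xyz a b c ≤ xyz a' b' c' ↔ a ≤ a' ∧ b ≤ b' ∧ c ≤ c' := by
  simp [Finsupp.le_def, Fin.forall_fin_succ]

@[simp] theorem xyz_tsub_xyz (a b c a' b' c' : ℕ) :
    xyz a b c - xyz a' b' c' = xyz (a - a') (b - b') (c - c') := by
  rw [eq_xyz (_ - _)]; simp

@[simp] theorem degree_xyz (a b c : ℕ) : (xyz a b c).degree = a + b + c := by
  simp [xyz]

theorem monomial_xyz {R : Type*} [CommSemiring R] (a b c : ℕ) (r : R) :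
    monomial (xyz a b c) r = C r * X 0 ^ a * X 1 ^ b * X 2 ^ c := by
  simp only [xyz, X_pow_eq_monomial, C_mul_monomial, monomial_mul, mul_one]

theorem totalDegree_le_of_forall_coeff_xyz {R : Type*} [CommSemiring R]
    {p : MvPolynomial (Fin 3) R} {n : ℕ}
    (h : ∀ a b c, coeff (xyz a b c) p ≠ 0 → a + b + c ≤ n) : p.totalDegree ≤ n :=
  Finset.sup_le fun m hm => by
    have := h (m 0) (m 1) (m 2) (by rwa [← eq_xyz, ← mem_support_iff])
    change m.degree ≤ n
    rwa [Finsupp.degree_eq_sum, Fin.sum_univ_three]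

theorem f1_eq_sum_monomial : f1 = monomial (xyz 3 0 0) 1 + monomial (xyz 0 3 0) 1
    + monomial (xyz 2 0 1) 3 + monomial (xyz 0 2 1) 3 + monomial (xyz 1 0 2) 3
    + monomial (xyz 0 1 2) 3 + monomial (xyz 0 0 3) 2 := by
  simp only [f1, monomial_xyz, map_one, map_ofNat, pow_zero, mul_one, one_mul]
  ring

theorem f2_eq_sum_monomial : f2 = monomial (xyz 3 0 0) 1 + monomial (xyz 1 2 0) 1
    + monomial (xyz 2 0 1) 1 + monomial (xyz 1 1 1) 2 + monomial (xyz 0 2 1) 3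
    + monomial (xyz 1 0 2) 4 + monomial (xyz 0 1 2) 2 + monomial (xyz 0 0 3) 2 := by
  simp only [f2, monomial_xyz, map_one, map_ofNat, pow_zero, mul_one, one_mul]
  ring

theorem totalDegree_f1_le : f1.totalDegree ≤ 3 :=
  totalDegree_le_of_forall_coeff_xyz fun a b c h => by
    simp only [f1_eq_sum_monomial, coeff_add, coeff_monomial, xyz_inj] at h
    split_ifs at h <;> first | omega | simp at h

theorem totalDegree_f2_le : f2.totalDegree ≤ 3 :=
  totalDegree_le_of_forall_coeff_xyz fun a b c h => by
    simp only [f2_eq_sum_monomial, coeff_add, coeff_monomial, xyz_inj] at h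
    split_ifs at h <;> first | omega | simp at h

theorem coeff_X_cube_eq_zero_of_totalDegree_mul_le {R : Type*} [CommSemiring R]
    [NoZeroDivisors R] {g h : MvPolynomial (Fin 3) R} (hgh : g * h ≠ 0)
    (hdeg : (g * h).totalDegree ≤ 3) (hh : 0 < h.totalDegree) : coeff (xyz 3 0 0) g = 0 := by
  apply coeff_eq_zero_of_totalDegree_lt
  rw [← Finsupp.degree_apply, degree_xyz]
  have := totalDegree_lt_totalDegree_mul hgh hh
  omega

theorem coeff_X_pos_and_coeff_X_sq_pos_of_coeff_X_cube_pos {R : Type*} [CommSemiring R]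
    [PartialOrder R] [NoZeroDivisors R] {g h : MvPolynomial (Fin 3) R}
    (hg : ∀ m, 0 ≤ coeff m g) (hh : ∀ m, 0 ≤ coeff m h)
    (hg0 : 0 < g.totalDegree) (hh0 : 0 < h.totalDegree)
    (hdeg : (g * h).totalDegree ≤ 3) (hX3 : 0 < coeff (xyz 3 0 0) (g * h)) :
    (0 < coeff (xyz 1 0 0) g ∧ 0 < coeff (xyz 2 0 0) h) ∨
      (0 < coeff (xyz 2 0 0) g ∧ 0 < coeff (xyz 1 0 0) h) := by
  have hgh : g * h ≠ 0 := fun h0 => by simp [h0] at hX3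
  obtain ⟨a, b, hab, ha, hb⟩ := exists_coeff_pos_of_coeff_mul_pos hg hh hX3
  rw [eq_xyz a, eq_xyz b, xyz_add_xyz, xyz_inj] at hab
  rw [eq_xyz a, show a 1 = 0 by omega, show a 2 = 0 by omega] at ha
  rw [eq_xyz b, show b 0 = 3 - a 0 by omega, show b 1 = 0 by omega, show b 2 = 0 by omega] at hb
  have : a 0 ≤ 3 := by omega
  interval_cases a 0
  · rw [mul_comm] at hgh hdeg
    rw [coeff_X_cube_eq_zero_of_totalDegree_mul_le hgh hdeg hg0] at hb
    exact absurd hb (lt_irrefl 0)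
  · exact .inl ⟨ha, hb⟩
  · exact .inr ⟨ha, hb⟩
  · rw [coeff_X_cube_eq_zero_of_totalDegree_mul_le hgh hdeg hh0] at ha
    exact absurd ha (lt_irrefl 0)

theorem f1_ne_mul_of_coeff_X_sq_pos {g h : MvPolynomial (Fin 3) ℝ}
    (hg : ∀ m, 0 ≤ coeff m g) (hh : ∀ m, 0 ≤ coeff m h) (hX2 : 0 < coeff (xyz 2 0 0) h) :
    f1 ≠ g * h := by
  intro hf
  have hY : ∀ j, coeff (xyz 0 j 0) g = 0 := fun j =>
    coeff_eq_zero_of_coeff_mul_eq_zero hg hh hX2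
      (by simp [← hf, f1_eq_sum_monomial, coeff_monomial])
  have hY3 : 0 < coeff (xyz 0 3 0) (g * h) := by
    simp [← hf, f1_eq_sum_monomial, coeff_monomial]
  obtain ⟨a, b, hab, ha, -⟩ := exists_coeff_pos_of_coeff_mul_pos hg hh hY3
  rw [eq_xyz a, eq_xyz b, xyz_add_xyz, xyz_inj] at hab
  rw [eq_xyz a, show a 0 = 0 by omega, show a 2 = 0 by omega, hY] at ha
  exact lt_irrefl 0 ha

theorem eq_of_coeff_f2_xyz_add_two_ne_zero {a b c : ℕ} (h : coeff (xyz (a + 2) b c) f2 ≠ 0) :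
    a = 1 ∧ b = 0 ∧ c = 0 ∨ a = 0 ∧ b = 0 ∧ c = 1 := by
  simp only [f2_eq_sum_monomial, coeff_add, coeff_monomial, xyz_inj] at h
  split_ifs at h <;> first | omega | simp_all

theorem f2_ne_mul_of_coeff_X_pos_of_coeff_X_sq_pos {g h : MvPolynomial (Fin 3) ℝ}
    (hg : ∀ m, 0 ≤ coeff m g) (hh : ∀ m, 0 ≤ coeff m h)
    (hX : 0 < coeff (xyz 1 0 0) g) (hX2 : 0 < coeff (xyz 2 0 0) h) : f2 ≠ g * h := by
  intro hf
  have hsupp : g.support ⊆ {xyz 1 0 0, xyz 0 0 1} := by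
    intro m hm
    rw [eq_xyz m] at hm ⊢
    have hm2 : coeff (xyz (m 0 + 2) (m 1) (m 2)) f2 ≠ 0 := fun h0 =>
      mem_support_iff.mp hm (coeff_eq_zero_of_coeff_mul_eq_zero hg hh hX2
        (by rwa [xyz_add_xyz, add_zero, add_zero, ← hf]))
    rcases eq_of_coeff_f2_xyz_add_two_ne_zero hm2 with ⟨h0, h1, h2⟩ | ⟨h0, h1, h2⟩ <;>
      simp [h0, h1, h2]
  have hXY : coeff (xyz 1 1 0) h = 0 :=
    coeff_eq_zero_of_coeff_mul_eq_zero hh hg hX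
      (by simp [mul_comm h, ← hf, f2_eq_sum_monomial, coeff_monomial])
  rw [eq_monomial_add_monomial_of_support_subset (by simp) hsupp] at hf
  set α := coeff (xyz 1 0 0) g
  set γ := coeff (xyz 0 0 1) g
  set τ := coeff (xyz 0 2 0) h
  set ε := coeff (xyz 0 1 1) h
  have hXY2 : α * τ = 1 := by
    simpa [f2_eq_sum_monomial, coeff_monomial, add_mul, coeff_monomial_mul'] using
      congrArg (coeff (xyz 1 2 0)) hf.symm
  have hY2Z : γ * τ = 3 := by
    simpa [f2_eq_sum_monomial, coeff_monomial, add_mul, coeff_monomial_mul'] using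
      congrArg (coeff (xyz 0 2 1)) hf.symm
  have hXYZ : α * ε = 2 := by
    simpa [f2_eq_sum_monomial, coeff_monomial, add_mul, coeff_monomial_mul', hXY] using
      congrArg (coeff (xyz 1 1 1)) hf.symm
  have hYZ2 : γ * ε = 2 := by
    simpa [f2_eq_sum_monomial, coeff_monomial, add_mul, coeff_monomial_mul'] using
      congrArg (coeff (xyz 0 1 2)) hf.symm
  have : (2 : ℝ) = 6 :=
    calc (2 : ℝ) = (α * τ) * (γ * ε) := by rw [hXY2, hYZ2]; norm_num
      _ = (γ * τ) * (α * ε) := by ring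
      _ = 6 := by rw [hY2Z, hXYZ]; norm_num
  norm_num at this

theorem stmt12 : NoNonnegFactorization f1 ∧ NoNonnegFactorization f2 := by
  constructor
  · rintro ⟨g, h, hg0, hh0, hg, hh, hf⟩
    have hX3 : 0 < coeff (xyz 3 0 0) (g * h) := by
      simp [← hf, f1_eq_sum_monomial, coeff_monomial]
    rcases coeff_X_pos_and_coeff_X_sq_pos_of_coeff_X_cube_pos hg hh hg0 hh0
        (hf ▸ totalDegree_f1_le) hX3 with
      ⟨-, hX2⟩ | ⟨hX2, -⟩
    · exact f1_ne_mul_of_coeff_X_sq_pos hg hh hX2 hf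
    · exact f1_ne_mul_of_coeff_X_sq_pos hh hg hX2 (hf.trans (mul_comm g h))
  · rintro ⟨g, h, hg0, hh0, hg, hh, hf⟩
    have hX3 : 0 < coeff (xyz 3 0 0) (g * h) := by
      simp [← hf, f2_eq_sum_monomial, coeff_monomial]
    rcases coeff_X_pos_and_coeff_X_sq_pos_of_coeff_X_cube_pos hg hh hg0 hh0
        (hf ▸ totalDegree_f2_le) hX3 with
      ⟨hX, hX2⟩ | ⟨hX2, hX⟩
    · exact f2_ne_mul_of_coeff_X_pos_of_coeff_X_sq_pos hg hh hX hX2 hf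
    · exact f2_ne_mul_of_coeff_X_pos_of_coeff_X_sq_pos hh hg hX hX2 (hf.trans (mul_comm g h))
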